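/- Let σ : V × V → V satisfy σ(x,y) ∈ N[x] for all x,y ∈ V, and let T ∈ ℕ be such that σ guarantees capture within T rounds in the turn-based game: for all x₀,y₀ ∈ V and every sequence (y_t)_{t≥0} with y_{t+1} ∈ N[y_t] for all t, the sequence defined by x_{t+1} = σ(x_t, y_t) satisfies x_{t+1} = y_t for some t < T. Let π_C^# be the memoryless randomized cop strategy in the concurrent game defined by: from position (x,y), sample a vertex v uniformly at random from N[y] and move the cop to σ(x,v). Then for every robber strategy π_R, every initial position (x,y) ∈ V², and every k ∈ ℕ, the probability (under the play measure induced by π_C^#, π_R, and (x,y)) that the robber has not been captured during the first k·T rounds is at most (1 − (1/n)^T)^k, where n = |V|. -/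

import Mathlib

open Finset Filter

noncomputable section

variable {V : Type*} [Fintype V] [DecidableEq V]

/-- The closed neighborhood `N[u]` of a vertex `u`: `u` together with its neighbors. -/
def nbhd (G : SimpleGraph V) [DecidableRel G.Adj] (u : V) : Finset V :=
  insert u (G.neighborFinset u)

lemma nbhd_nonempty (G : SimpleGraph V) [DecidableRel G.Adj] (u : V) :
    (nbhd G u).Nonempty :=
  ⟨u, Finset.mem_insert_self u _⟩

/-! ### The single-cop concurrent game, with the expected-capture-time payoff -/

/-- A randomized strategy in the single-cop concurrent game: to each finite history of
positions (cop location, robber location) it assigns a distribution over next moves. -/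
abbrev Strat (V : Type*) := List (V × V) → PMF V

/-- A strategy is memoryless if the distribution it assigns depends only on the
current (most recent) position. -/
def Memoryless (π : Strat V) : Prop :=
  ∀ h₁ h₂ : List (V × V), h₁.getLast? = h₂.getLast? → π h₁ = π h₂

/-- The single-cop CCCR transition function: simultaneous moves within closed
neighborhoods (illegal moves ignored), capture positions are absorbing, and a swap of
adjacent vertices is an \"en passant\" capture. -/
def step1 (G : SimpleGraph V) [DecidableRel G.Adj] (p : V × V) (u w : V) : V × V :=
  if p.1 = p.2 then p
  else
    let u' := if u ∈ nbhd G p.1 then u else p.1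
    let w' := if w ∈ nbhd G p.2 then w else p.2
    if u' = p.2 ∧ w' = p.1 then (u', u') else (u', w')

/-- The distribution over histories of the first `t+1` positions, induced by the
strategies `πC, πR` and the initial position `init`. -/
def play1 (G : SimpleGraph V) [DecidableRel G.Adj]
    (πC πR : Strat V) (init : V × V) : ℕ → PMF (List (V × V))
  | 0 => PMF.pure [init]
  | (t+1) => (play1 G πC πR init t).bind fun h =>
      (πC h).bind fun u => (πR h).bind fun w =>
        PMF.pure (h ++ [step1 G (h.getLast?.getD init) u w])

/-- The probability that cop and robber occupy different vertices at time `t`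
(capture is absorbing, so this is the probability that the robber is still free). -/
def freeProb1 (G : SimpleGraph V) [DecidableRel G.Adj]
    (πC πR : Strat V) (init : V × V) (t : ℕ) : ENNReal :=
  (play1 G πC πR init t).toOuterMeasure
    {h | (h.getLast?.getD init).1 ≠ (h.getLast?.getD init).2}

/-- The payoff: the expected number of rounds `t ≥ 0` at which cop and robber occupy
different vertices, i.e. the expected capture time. -/
def payoff (G : SimpleGraph V) [DecidableRel G.Adj]
    (πC πR : Strat V) (init : V × V) : ENNReal :=
  ∑' t : ℕ, freeProb1 G πC πR init t

/-- The (upper) value of the game started at `init`; the cop minimizes and the robber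
maximizes the expected capture time. -/
def gameValue (G : SimpleGraph V) [DecidableRel G.Adj] (init : V × V) : ENNReal :=
  ⨅ πC : Strat V, ⨆ πR : Strat V, payoff G πC πR init

/-- The cop trajectory generated in the turn-based game by the positional cop strategy
`σ` from initial cop position `x₀`, against robber trajectory `ys`:
`x_{t+1} = σ (x_t, y_t)`. -/
def copSeq (σ : V × V → V) (x₀ : V) (ys : ℕ → V) : ℕ → V
  | 0 => x₀
  | (t+1) => σ (copSeq σ x₀ ys t, ys t)

/-- The memoryless randomized cop strategy `π_C^#` for the concurrent game: from
position `(x, y)`, sample a vertex `v` uniformly at random from `N[y]` and move the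
cop to `σ (x, v)`. -/
def piCSharp (G : SimpleGraph V) [DecidableRel G.Adj] [Nonempty V]
    (σ : V × V → V) : Strat V := fun h =>
  match h.getLast? with
  | some p => (PMF.uniformOfFinset (nbhd G p.2) (nbhd_nonempty G p.2)).map fun v => σ (p.1, v)
  | none => PMF.uniformOfFintype V

/-! Whatever the robber does, the cop's uniform guess `v ∈ N[y]` coincides with the robber's
actual move with probability at least `1 / |N[y]| ≥ 1 / n`. After a correct guess the cop has
answered the true move with `σ`, so the new position is a capture or one from which `σ` catches
within one round fewer. Hence from any history the robber is caught within the next `T` rounds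
with probability at least `n⁻ᵀ`, and as capture is absorbing, the probability of still being
free shrinks by the factor `1 - n⁻ᵀ` over every block of `T` rounds. -/

namespace PMF

variable {α β : Type*}

theorem toOuterMeasure_apply_compl (p : PMF α) (s : Set α) :
    p.toOuterMeasure sᶜ = 1 - p.toOuterMeasure s := by
  have hsum : p.toOuterMeasure s + p.toOuterMeasure sᶜ = 1 := by
    rw [toOuterMeasure_apply, toOuterMeasure_apply, ← ENNReal.tsum_add,
      ← Pi.add_def, Set.indicator_self_add_compl, tsum_coe]
  rw [← hsum, ENNReal.add_sub_cancel_left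
    (p.toOuterMeasure_apply s ▸ p.tsum_coe_indicator_ne_top s)]

theorem toOuterMeasure_mul_le_toOuterMeasure_bind (p : PMF α) (f : α → PMF β)
    {s : Set α} {t : Set β} {c : ENNReal} (hf : ∀ a ∈ s, c ≤ (f a).toOuterMeasure t) :
    p.toOuterMeasure s * c ≤ (p.bind f).toOuterMeasure t := by
  rw [toOuterMeasure_apply, ← ENNReal.tsum_mul_right, toOuterMeasure_bind_apply]
  refine ENNReal.tsum_le_tsum fun a => ?_
  by_cases ha : a ∈ s
  · rw [Set.indicator_of_mem ha]
    exact mul_le_mul_right (hf a ha) _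
  · rw [Set.indicator_of_notMem ha, zero_mul]
    exact zero_le

theorem le_toOuterMeasure_bind (p : PMF α) (f : α → PMF β) {t : Set β} {c : ENNReal}
    (hf : ∀ a, c ≤ (f a).toOuterMeasure t) : c ≤ (p.bind f).toOuterMeasure t := by
  have hone : p.toOuterMeasure Set.univ = 1 :=
    (p.toOuterMeasure_apply_eq_one_iff _).2 (Set.subset_univ _)
  simpa [hone] using p.toOuterMeasure_mul_le_toOuterMeasure_bind f fun a (_ : a ∈ Set.univ) => hf a

theorem toOuterMeasure_bind_le_mul (p : PMF α) (f : α → PMF β)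
    {s : Set α} {t : Set β} {c : ENNReal} (hs : ∀ a ∈ s, (f a).toOuterMeasure t ≤ c)
    (hsc : ∀ a ∉ s, (f a).toOuterMeasure t = 0) :
    (p.bind f).toOuterMeasure t ≤ p.toOuterMeasure s * c := by
  rw [toOuterMeasure_bind_apply, toOuterMeasure_apply, ← ENNReal.tsum_mul_right]
  refine ENNReal.tsum_le_tsum fun a => ?_
  by_cases ha : a ∈ s
  · rw [Set.indicator_of_mem ha]
    exact mul_le_mul_right (hs a ha) _
  · rw [Set.indicator_of_notMem ha, hsc a ha, mul_zero, zero_mul]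

end PMF

omit [Fintype V] [DecidableEq V] in
theorem copSeq_cons (σ : V × V → V) (x w : V) (ys : ℕ → V) :
    ∀ t, copSeq σ x (fun | 0 => w | t + 1 => ys t) (t + 1) = copSeq σ (σ (x, w)) ys t
  | 0 => rfl
  | t + 1 => by rw [copSeq, copSeq_cons σ x w ys t]; rfl

section TurnBased

variable (G : SimpleGraph V) [DecidableRel G.Adj]

theorem self_mem_nbhd (u : V) : u ∈ nbhd G u := Finset.mem_insert_self _ _

def CatchesWithin (σ : V × V → V) (m : ℕ) (p : V × V) : Prop :=
  p.1 = p.2 ∨ ∀ ys : ℕ → V, ys 0 ∈ nbhd G p.2 → (∀ t, ys (t + 1) ∈ nbhd G (ys t)) →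
    ∃ t < m, copSeq σ p.1 ys (t + 1) = ys t

theorem step1_of_caught {p : V × V} (hp : p.1 = p.2) (u w : V) : step1 G p u w = p := by
  simp [step1, hp]

variable {G}

theorem CatchesWithin.of_succ {σ : V × V → V} {m : ℕ} {p : V × V}
    (hp : CatchesWithin G σ (m + 1) p) (hfree : p.1 ≠ p.2) {w : V} (hw : w ∈ nbhd G p.2) :
    CatchesWithin G σ m (σ (p.1, w), w) := by
  by_cases hcaught : σ (p.1, w) = w
  · exact Or.inl hcaught
  refine Or.inr fun ys hys0 hys => ?_
  obtain ⟨t, ht, hcap⟩ := hp.resolve_left hfree (fun | 0 => w | t + 1 => ys t) hw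
    (fun | 0 => hys0 | t + 1 => hys t)
  cases t with
  | zero => exact absurd hcap hcaught
  | succ t => exact ⟨t, by omega, by rwa [copSeq_cons] at hcap⟩

end TurnBased

section Concurrent

variable (G : SimpleGraph V) [DecidableRel G.Adj]

def curPos (init : V × V) (h : List (V × V)) : V × V := h.getLast?.getD init

omit [Fintype V] [DecidableEq V] in
theorem curPos_append_singleton (init : V × V) (h : List (V × V)) (q : V × V) :
    curPos init (h ++ [q]) = q := by
  simp [curPos]

def caught (init : V × V) : Set (List (V × V)) := {h | (curPos init h).1 = (curPos init h).2}

def stepDist (πC πR : Strat V) (init : V × V) (h : List (V × V)) : PMF (List (V × V)) :=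
  (πC h).bind fun u => (πR h).bind fun w => PMF.pure (h ++ [step1 G (curPos init h) u w])

def playFrom (πC πR : Strat V) (init : V × V) (h : List (V × V)) : ℕ → PMF (List (V × V))
  | 0 => PMF.pure h
  | m + 1 => (stepDist G πC πR init h).bind fun h' => playFrom πC πR init h' m

theorem freeProb1_eq (πC πR : Strat V) (init : V × V) (t : ℕ) :
    freeProb1 G πC πR init t = (play1 G πC πR init t).toOuterMeasure (caught init)ᶜ :=
  rfl

variable {G}

theorem play1_add (πC πR : Strat V) (init : V × V) (t m : ℕ) :
    play1 G πC πR init (t + m) = (play1 G πC πR init t).bind (playFrom G πC πR init · m) := by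
  induction m generalizing t with
  | zero => exact (PMF.bind_pure _).symm
  | succ m ih =>
    rw [← Nat.succ_add_eq_add_succ, ih, play1, PMF.bind_bind]
    rfl

theorem curPos_of_mem_support_playFrom {πC πR : Strat V} {init : V × V} {h : List (V × V)}
    (hh : h ∈ caught init) {m : ℕ} {h' : List (V × V)}
    (hh' : h' ∈ (playFrom G πC πR init h m).support) : curPos init h' = curPos init h := by
  induction m generalizing h with
  | zero => rw [playFrom, PMF.support_pure] at hh'; rw [hh']
  | succ m ih =>
    obtain ⟨h₁, hh₁, hh'⟩ := (PMF.mem_support_bind_iff _ _ _).1 hh'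
    simp only [stepDist, PMF.mem_support_bind_iff, PMF.support_pure,
      Set.mem_singleton_iff] at hh₁
    obtain ⟨u, -, w, -, rfl⟩ := hh₁
    have hpos : curPos init (h ++ [step1 G (curPos init h) u w]) = curPos init h := by
      rw [curPos_append_singleton, step1_of_caught G hh]
    refine (ih ?_ hh').trans hpos
    show (curPos init _).1 = (curPos init _).2
    rwa [hpos]

theorem freeProb1_add_le (πC πR : Strat V) (init : V × V) (t T : ℕ) {q : ENNReal}
    (hq : ∀ h, q ≤ (playFrom G πC πR init h T).toOuterMeasure (caught init)) :
    freeProb1 G πC πR init (t + T) ≤ (1 - q) * freeProb1 G πC πR init t := by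
  rw [freeProb1_eq, freeProb1_eq, play1_add, mul_comm]
  refine PMF.toOuterMeasure_bind_le_mul _ _ (fun h _ => ?_) (fun h hh => ?_)
  · rw [PMF.toOuterMeasure_apply_compl]
    exact tsub_le_tsub_left (hq h) 1
  · have hcaught : h ∈ caught init := not_not.1 hh
    rw [PMF.toOuterMeasure_apply_eq_zero_iff, Set.disjoint_left]
    intro h' hh' hfree
    apply hfree
    show (curPos init h').1 = (curPos init h').2
    rwa [curPos_of_mem_support_playFrom hcaught hh']

theorem freeProb1_mul_le (πC πR : Strat V) (init : V × V) (T : ℕ) {q : ENNReal}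
    (hq : ∀ h, q ≤ (playFrom G πC πR init h T).toOuterMeasure (caught init)) (k : ℕ) :
    freeProb1 G πC πR init (k * T) ≤ (1 - q) ^ k := by
  induction k with
  | zero =>
    rw [pow_zero, freeProb1_eq, PMF.toOuterMeasure_apply_compl]
    exact tsub_le_self
  | succ k ih =>
    calc freeProb1 G πC πR init ((k + 1) * T)
        ≤ (1 - q) * freeProb1 G πC πR init (k * T) := by
          rw [Nat.succ_mul]; exact freeProb1_add_le πC πR init _ _ hq
      _ ≤ (1 - q) ^ (k + 1) := by rw [pow_succ']; gcongr

end Concurrent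

section Guessing

variable {G : SimpleGraph V} [DecidableRel G.Adj] [Nonempty V] {σ : V × V → V}

theorem piCSharp_apply_response (init : V × V) (h : List (V × V)) {w : V}
    (hw : w ∈ nbhd G (curPos init h).2) :
    (Fintype.card V : ENNReal)⁻¹ ≤ piCSharp G σ h (σ ((curPos init h).1, w)) := by
  unfold piCSharp curPos at *
  cases hlast : h.getLast? with
  | none => simp [PMF.uniformOfFintype_apply]
  | some p =>
    simp only [hlast, Option.getD_some] at hw ⊢
    rw [PMF.map_apply]
    refine le_trans ?_ (ENNReal.le_tsum w)
    rw [if_pos rfl, PMF.uniformOfFinset_apply_of_mem (ha := hw)]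
    exact ENNReal.inv_le_inv.2 (mod_cast Finset.card_le_univ _)

theorem stepDist_piCSharp_catchesWithin (hσ : ∀ x y : V, σ (x, y) ∈ nbhd G x)
    (πR : Strat V) (init : V × V) (h : List (V × V)) {m : ℕ}
    (hh : CatchesWithin G σ (m + 1) (curPos init h)) :
    (Fintype.card V : ENNReal)⁻¹ ≤ (stepDist G (piCSharp G σ) πR init h).toOuterMeasure
      {h' | CatchesWithin G σ m (curPos init h')} := by
  rw [stepDist, PMF.bind_comm]
  refine PMF.le_toOuterMeasure_bind _ _ fun w => ?_
  set p := curPos init h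
  by_cases hp : p.1 = p.2
  · refine PMF.le_toOuterMeasure_bind _ _ fun u => ?_
    rw [PMF.toOuterMeasure_pure_apply, if_pos]
    · exact ENNReal.inv_le_one.2 (mod_cast Fintype.card_pos)
    · show CatchesWithin G σ m (curPos init _)
      rw [curPos_append_singleton, step1_of_caught G hp]
      exact Or.inl hp
  -- the robber's move as `step1` executes it
  set w' := if w ∈ nbhd G p.2 then w else p.2
  have hw' : w' ∈ nbhd G p.2 := by
    unfold w'; split_ifs with hw
    exacts [hw, self_mem_nbhd G _]
  set u := σ (p.1, w')
  have hlucky : CatchesWithin G σ m (step1 G p u w) := by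
    have hstep : step1 G p u w = if u = p.2 ∧ w' = p.1 then (u, u) else (u, w') := by
      simp [step1, hp, u, hσ, w']
    rw [hstep]
    split_ifs
    exacts [Or.inl rfl, hh.of_succ hp hw']
  calc (Fintype.card V : ENNReal)⁻¹ ≤ piCSharp G σ h u := piCSharp_apply_response init h hw'
    _ ≤ _ := by
      rw [PMF.toOuterMeasure_bind_apply]
      refine le_trans ?_ (ENNReal.le_tsum u)
      rw [PMF.toOuterMeasure_pure_apply, if_pos, mul_one]
      show CatchesWithin G σ m (curPos init _)
      rwa [curPos_append_singleton]

theorem playFrom_piCSharp_caught (hσ : ∀ x y : V, σ (x, y) ∈ nbhd G x)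
    (πR : Strat V) (init : V × V) (h : List (V × V)) {m : ℕ}
    (hh : CatchesWithin G σ m (curPos init h)) :
    (Fintype.card V : ENNReal)⁻¹ ^ m ≤
      (playFrom G (piCSharp G σ) πR init h m).toOuterMeasure (caught init) := by
  induction m generalizing h with
  | zero =>
    obtain hcaught | hcatch := hh
    · rw [pow_zero, playFrom, PMF.toOuterMeasure_pure_apply,
        if_pos (show h ∈ caught init from hcaught)]
    · obtain ⟨t, ht, -⟩ := hcatch (fun _ => (curPos init h).2) (self_mem_nbhd G _)
        fun _ => self_mem_nbhd G _
      exact absurd ht t.not_lt_zero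
  | succ m ih =>
    rw [pow_succ', playFrom]
    exact (mul_le_mul_left (stepDist_piCSharp_catchesWithin hσ πR init h hh) _).trans
      (PMF.toOuterMeasure_mul_le_toOuterMeasure_bind _ _ fun h' hh' => ih h' hh')

end Guessing

theorem freeProb_le_of_guessing_general (G : SimpleGraph V) [DecidableRel G.Adj] [Nonempty V]
    (σ : V × V → V) (hσ : ∀ x y : V, σ (x, y) ∈ nbhd G x) (T : ℕ)
    (hT : ∀ (x₀ : V) (ys : ℕ → V), (∀ t, ys (t+1) ∈ nbhd G (ys t)) →
      ∃ t < T, copSeq σ x₀ ys (t+1) = ys t) :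
    ∀ (πR : Strat V) (init : V × V) (k : ℕ),
      freeProb1 G (piCSharp G σ) πR init (k * T) ≤
        (1 - ((Fintype.card V : ENNReal))⁻¹ ^ T) ^ k := by
  intro πR init k
  refine freeProb1_mul_le _ πR init T (fun h => ?_) k
  exact playFrom_piCSharp_caught hσ πR init h (Or.inr fun ys _ hys => hT _ ys hys)

/-- if the positional cop strategy `σ` guarantees capture within `T`
rounds in the turn-based game, then under the memoryless randomized strategy `π_C^#`
(guess the robber's next move uniformly in `N[y]` and respond with `σ`), for every
robber strategy, every initial position and every `k`, the probability that the robber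
is still free after `k·T` rounds is at most `(1 - (1/n)^T)^k`, where `n = |V|`. -/
theorem freeProb_le_of_guessing (G : SimpleGraph V) [DecidableRel G.Adj] [Nonempty V]
    (hconn : G.Connected) (σ : V × V → V) (hσ : ∀ x y : V, σ (x, y) ∈ nbhd G x) (T : ℕ)
    (hT : ∀ (x₀ : V) (ys : ℕ → V), (∀ t, ys (t+1) ∈ nbhd G (ys t)) →
      ∃ t < T, copSeq σ x₀ ys (t+1) = ys t) :
    ∀ (πR : Strat V) (init : V × V) (k : ℕ),
      freeProb1 G (piCSharp G σ) πR init (k * T) ≤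
        (1 - ((Fintype.card V : ENNReal))⁻¹ ^ T) ^ k :=
  freeProb_le_of_guessing_general G σ hσ T hT
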